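/- Let p, q be coprime positive integers and let p', q' be integers with p·p' + q·q' = 1. Define f : ℂ → ℂ² by f(0) = (0,0) and, for z = r·e^{iθ} with r > 0, f(z) = (r^{1/(2p)}·e^{i p' θ}, r^{1/(2q)}·e^{i q' θ}) (using any choice of argument θ of z; the formula is well defined). Then f is continuous on ℂ and satisfies f₁(z)^p · f₂(z)^q = z for all z ∈ ℂ, i.e. f is a continuous global section of the map h(z,w) = z^p w^q. -/

import Mathlib

open Complex

/-!
Writing `z = r e^{iθ}`, the two components are `r^{1/(2p)} (z/|z|)^{p'}` and
`r^{1/(2q)} (z/|z|)^{q'}`, where `z/|z| = e^{iθ}` makes the choice of `θ` irrelevant.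
Away from `0` these are continuous since `z/|z|` is; at `0` they are bounded by the vanishing moduli
`|z|^{1/(2p)}`, `|z|^{1/(2q)}`. For the section property the moduli multiply to
`r^{1/2} r^{1/2} = r` and the phases to `(z/|z|)^{pp' + qq'} = z/|z|`.
-/

/-- `r^a e^{inθ}` for `z = r e^{iθ}`. -/
noncomputable def polarMonomial (a : ℝ) (n : ℤ) (z : ℂ) : ℂ :=
  ((‖z‖ ^ a : ℝ) : ℂ) * (z / ‖z‖) ^ n

section polarMonomial

variable {a b : ℝ} {n m : ℤ} {z : ℂ}

theorem exp_I_mul_intCast_mul_arg (hz : z ≠ 0) (n : ℤ) :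
    exp (I * n * arg z) = (z / ‖z‖) ^ n := by
  have hnorm : (‖z‖ : ℂ) ≠ 0 := by simpa using hz
  have hunit : z / ‖z‖ = exp (arg z * I) := by
    rw [div_eq_iff hnorm, mul_comm, norm_mul_exp_arg_mul_I]
  rw [hunit, ← exp_int_mul]
  ring_nf

theorem polarMonomial_eq_exp (hz : z ≠ 0) :
    polarMonomial a n z = ((‖z‖ ^ a : ℝ) : ℂ) * exp (I * n * arg z) := by
  rw [polarMonomial, exp_I_mul_intCast_mul_arg hz]

theorem polarMonomial_zero (ha : a ≠ 0) (n : ℤ) : polarMonomial a n 0 = 0 := by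
  simp [polarMonomial, Real.zero_rpow ha]

theorem polarMonomial_one_one (z : ℂ) : polarMonomial 1 1 z = z := by
  rcases eq_or_ne z 0 with rfl | hz
  · exact polarMonomial_zero one_ne_zero 1
  · have hnorm : (‖z‖ : ℂ) ≠ 0 := by simpa using hz
    rw [polarMonomial, Real.rpow_one, zpow_one, mul_div_cancel₀ _ hnorm]

theorem polarMonomial_pow (a : ℝ) (n : ℤ) (z : ℂ) (k : ℕ) :
    polarMonomial a n z ^ k = polarMonomial (k * a) (k * n) z := by
  rw [polarMonomial, polarMonomial, mul_pow, ← ofReal_pow, ← Real.rpow_natCast,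
    ← Real.rpow_mul (norm_nonneg z), mul_comm a, ← zpow_natCast, ← zpow_mul, mul_comm n]

theorem polarMonomial_mul (hz : z ≠ 0) :
    polarMonomial a n z * polarMonomial b m z = polarMonomial (a + b) (n + m) z := by
  have hnorm : (‖z‖ : ℂ) ≠ 0 := by simpa using hz
  rw [polarMonomial, polarMonomial, polarMonomial, Real.rpow_add (norm_pos_iff.mpr hz),
    zpow_add₀ (div_ne_zero hz hnorm), ofReal_mul]
  ring

theorem norm_polarMonomial_le (ha : a ≠ 0) (n : ℤ) (z : ℂ) :
    ‖polarMonomial a n z‖ ≤ ‖z‖ ^ a := by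
  rcases eq_or_ne z 0 with rfl | hz
  · simp [polarMonomial_zero ha, Real.zero_rpow ha]
  · have hnorm : ‖z‖ ≠ 0 := norm_ne_zero_iff.mpr hz
    simp [polarMonomial, hnorm, abs_of_nonneg (Real.rpow_nonneg (norm_nonneg z) a)]

theorem continuousAt_polarMonomial_of_ne_zero (a : ℝ) (n : ℤ) (hz : z ≠ 0) :
    ContinuousAt (polarMonomial a n) z := by
  have hnorm : (‖z‖ : ℂ) ≠ 0 := by simpa using hz
  unfold polarMonomial
  fun_prop (disch := simp [hz, hnorm])

theorem continuousAt_polarMonomial_zero (ha : 0 < a) (n : ℤ) :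
    ContinuousAt (polarMonomial a n) 0 := by
  rw [ContinuousAt, polarMonomial_zero ha.ne']
  refine squeeze_zero_norm (norm_polarMonomial_le ha.ne' n) ?_
  simpa [Real.zero_rpow ha.ne'] using
    (continuous_norm.rpow_const fun _ => Or.inr ha.le).tendsto (0 : ℂ)

theorem continuous_polarMonomial (ha : 0 < a) (n : ℤ) : Continuous (polarMonomial a n) := by
  refine continuous_iff_continuousAt.mpr fun z => ?_
  rcases eq_or_ne z 0 with rfl | hz
  · exact continuousAt_polarMonomial_zero ha n
  · exact continuousAt_polarMonomial_of_ne_zero a n hz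

end polarMonomial

theorem holder_continuous_section_of_zp_wq_general
    (p q : ℕ) (hp : 0 < p) (hq : 0 < q)
    (p' q' : ℤ) (hbezout : (p : ℤ) * p' + (q : ℤ) * q' = 1)
    (f : ℂ → ℂ × ℂ)
    (hf0 : f 0 = (0, 0))
    (hf : ∀ z : ℂ, z ≠ 0 →
      f z = (((‖z‖ ^ ((1 : ℝ) / (2 * p)) : ℝ) : ℂ) *
               Complex.exp (Complex.I * p' * Complex.arg z),
             ((‖z‖ ^ ((1 : ℝ) / (2 * q)) : ℝ) : ℂ) *
               Complex.exp (Complex.I * q' * Complex.arg z))) :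
    Continuous f ∧ ∀ z : ℂ, (f z).1 ^ p * (f z).2 ^ q = z := by
  have hp₀ : (0 : ℝ) < 1 / (2 * p) := by positivity
  have hq₀ : (0 : ℝ) < 1 / (2 * q) := by positivity
  obtain rfl :
      f = fun z => (polarMonomial (1 / (2 * p)) p' z, polarMonomial (1 / (2 * q)) q' z) := by
    funext z
    rcases eq_or_ne z 0 with rfl | hz
    · rw [hf0, polarMonomial_zero hp₀.ne', polarMonomial_zero hq₀.ne']
    · rw [hf z hz, polarMonomial_eq_exp hz, polarMonomial_eq_exp hz]
  refine ⟨(continuous_polarMonomial hp₀ p').prodMk (continuous_polarMonomial hq₀ q'),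
    fun z => ?_⟩
  dsimp only
  rcases eq_or_ne z 0 with rfl | hz
  · rw [polarMonomial_zero hp₀.ne', zero_pow hp.ne', zero_mul]
  · rw [polarMonomial_pow, polarMonomial_pow, polarMonomial_mul hz]
    have hmoduli : (p : ℝ) * (1 / (2 * p)) + q * (1 / (2 * q)) = 1 := by
      field_simp
      norm_num
    rw [hmoduli, hbezout, polarMonomial_one_one]

/-- The Hölder-continuous section of `h(z,w) = z^p w^q`:
`f(r e^{iθ}) = (r^{1/(2p)} e^{i p' θ}, r^{1/(2q)} e^{i q' θ})`, `f(0) = (0,0)`. -/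
theorem holder_continuous_section_of_zp_wq
    (p q : ℕ) (hp : 0 < p) (hq : 0 < q) (hpq : Nat.Coprime p q)
    (p' q' : ℤ) (hbezout : (p : ℤ) * p' + (q : ℤ) * q' = 1)
    (f : ℂ → ℂ × ℂ)
    (hf0 : f 0 = (0, 0))
    (hf : ∀ z : ℂ, z ≠ 0 →
      f z = (((‖z‖ ^ ((1 : ℝ) / (2 * p)) : ℝ) : ℂ) *
               Complex.exp (Complex.I * p' * Complex.arg z),
             ((‖z‖ ^ ((1 : ℝ) / (2 * q)) : ℝ) : ℂ) *
               Complex.exp (Complex.I * q' * Complex.arg z))) :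
    Continuous f ∧ ∀ z : ℂ, (f z).1 ^ p * (f z).2 ^ q = z :=
  holder_continuous_section_of_zp_wq_general p q hp hq p' q' hbezout f hf0 hf
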